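/- Let J, B, Ξ be real n × n matrices with J·J = −1 (negative of the identity) and J·B = −B·J. Then (1/4)·tr(J·(Ξ·J − J·Ξ)·B) = (1/2)·tr(Ξ·B). Equivalently, with σ_J(A,B) = (1/4)·tr(JAB) and the infinitesimal conjugation action of Ξ at J given by Ξ̄_J = ΞJ − JΞ, one has σ_J(Ξ̄_J, B) = −(d/ds)|_{s=0} μ_Ξ(J + sB) where μ_Ξ(J) = −(1/2)·tr(Ξ·J). -/
import Mathlib


/-- Let `J, B, Ξ` be real `n × n` matrices with `J * J = -1` and
`J * B = -(B * J)`. Then `(1/4) * tr (J * (Ξ*J - J*Ξ) * B) = (1/2) * tr (Ξ * B)`.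
This is the moment map identity for `μ_Ξ(J) = -(1/2) tr (Ξ J)` with respect to the
trace Kähler form `σ_J(A,B) = (1/4) tr (J A B)` and the infinitesimal conjugation
action `Ξ̄_J = Ξ J - J Ξ`. -/
theorem trace_moment_map_identity (n : ℕ) (J B Ξ : Matrix (Fin n) (Fin n) ℝ)
    (hJ : J * J = -1) (hB : J * B = -(B * J)) :
    (1 / 4 : ℝ) * (J * (Ξ * J - J * Ξ) * B).trace = (1 / 2 : ℝ) * (Ξ * B).trace := by
  have hBJ : B * J = -(J * B) := by rw [hB, neg_neg]
  have hsplit : J * (Ξ * J - J * Ξ) * B = J * (Ξ * (J * B)) + Ξ * B := by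
    have : J * J = -1 := hJ
    rw [mul_sub, sub_mul]
    rw [show J * (J * Ξ) * B = (J * J) * (Ξ * B) by noncomm_ring, hJ]
    noncomm_ring
  have hkey : (J * (Ξ * (J * B))).trace = (Ξ * B).trace := by
    rw [Matrix.trace_mul_comm J (Ξ * (J * B))]
    rw [show Ξ * (J * B) * J = Ξ * (J * (B * J)) by noncomm_ring, hBJ]
    rw [show Ξ * (J * -(J * B)) = -(Ξ * ((J * J) * B)) by noncomm_ring, hJ]
    rw [show -(Ξ * ((-1 : Matrix (Fin n) (Fin n) ℝ) * B)) = Ξ * B by noncomm_ring]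
  rw [hsplit, Matrix.trace_add, hkey]
  ring
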